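/- arXiv:1904.10805 — 8 statements merged into one kernel-verified Lean document; each statement's English description precedes it below -/
import Mathlib

section
/- Let G : C ⟶ D be a dagger functor between dagger categories, let F : C ⟶ D be any functor, and let σ : F ⟹ G be a natural transformation whose components are dagger monomorphisms (σ_A† ∘ σ_A = id). Then F is a dagger functor, i.e. F(f†) = F(f)† for all morphisms f. -/
open CategoryTheory

/-- A dagger on a category: an involutive, identity-on-objects, contravariant endofunctor. -/
class DaggerCategory (C : Type*) [Category C] where
  dag : ∀ {A B : C}, (A ⟶ B) → (B ⟶ A)
  dag_id : ∀ (A : C), dag (𝟙 A) = 𝟙 A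
  dag_comp : ∀ {A B D : C} (f : A ⟶ B) (g : B ⟶ D), dag (f ≫ g) = dag g ≫ dag f
  dag_dag : ∀ {A B : C} (f : A ⟶ B), dag (dag f) = f

open DaggerCategory

/-
Dagger-monicity of `σ` exhibits `F` as a conjugate of `G`: `F f = σ_A ≫ G f ≫ σ_B†`.
The dagger of this expression is `σ_B ≫ (G f)† ≫ σ_A† = σ_B ≫ G (f†) ≫ σ_A† = F (f†)`.
-/

theorem DaggerCategory.dag_comp_comp {C : Type*} [Category C] [DaggerCategory C]
    {A B D E : C} (f : A ⟶ B) (g : B ⟶ D) (h : D ⟶ E) :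
    dag (f ≫ g ≫ h) = dag h ≫ dag g ≫ dag f := by
  rw [dag_comp, dag_comp, Category.assoc]

theorem CategoryTheory.NatTrans.map_eq_app_comp_map_comp_dag_app {C D : Type*} [Category C]
    [Category D] [DaggerCategory D] {F G : C ⥤ D} (σ : F ⟶ G) {A B : C}
    (hσB : σ.app B ≫ dag (σ.app B) = 𝟙 (F.obj B)) (f : A ⟶ B) :
    F.map f = σ.app A ≫ G.map f ≫ dag (σ.app B) := by
  rw [← Category.assoc, ← σ.naturality, Category.assoc, hσB, Category.comp_id]

/-- If `G` is a dagger functor and `σ : F ⟶ G` is pointwise dagger monic,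
then `F` is a dagger functor. -/
theorem dagger_functor_of_pointwise_dagger_mono {C D : Type*} [Category C] [Category D]
    [DaggerCategory C] [DaggerCategory D] (F G : C ⥤ D)
    (hG : ∀ {A B : C} (f : A ⟶ B), G.map (dag f) = dag (G.map f))
    (σ : F ⟶ G) (hσ : ∀ A : C, σ.app A ≫ dag (σ.app A) = 𝟙 (F.obj A)) :
    ∀ {A B : C} (f : A ⟶ B), F.map (dag f) = dag (F.map f) := by
  intro A B f
  rw [σ.map_eq_app_comp_map_comp_dag_app (hσ A), σ.map_eq_app_comp_map_comp_dag_app (hσ B),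
    hG, dag_comp_comp, dag_dag]
end

section
/- If F : C ⟶ D and G : D ⟶ C are dagger functors between dagger categories with F left adjoint to G via a natural bijection θ : Hom(F A, B) ≅ Hom(A, G B), then G is also left adjoint to F, via the natural bijection Hom(G A, B) ≅ Hom(A, F B) sending f to θ(f†)†. -/
open CategoryTheory

open DaggerCategory

namespace DaggerCategory

variable {C : Type*} [Category C] [DaggerCategory C]

@[simps]
def dagEquiv (A B : C) : (A ⟶ B) ≃ (B ⟶ A) where
  toFun := dag
  invFun := dag
  left_inv := dag_dag
  right_inv := dag_dag

end DaggerCategory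

namespace CategoryTheory.Adjunction

variable {C D : Type*} [Category C] [Category D] [DaggerCategory C] [DaggerCategory D]
  {F : C ⥤ D} {G : D ⥤ C}

def daggerSymm (adj : F ⊣ G) (hF : ∀ {A B : C} (f : A ⟶ B), F.map (dag f) = dag (F.map f))
    (hG : ∀ {A B : D} (f : A ⟶ B), G.map (dag f) = dag (G.map f)) : G ⊣ F :=
  mkOfHomEquiv
    { homEquiv := fun A B => (dagEquiv _ _).trans ((adj.homEquiv B A).symm.trans (dagEquiv _ _))
      -- naturality in each variable is naturality of `adj.homEquiv` in the other one, under `†`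
      homEquiv_naturality_left_symm := fun f g => by
        simp only [Equiv.symm_trans_apply, Equiv.symm_symm, dagEquiv_symm_apply,
          dag_comp, homEquiv_naturality_right, hG, dag_dag]
      homEquiv_naturality_right := fun f g => by
        simp only [Equiv.trans_apply, dagEquiv_apply, dag_comp,
          homEquiv_naturality_left_symm, hF, dag_dag] }

lemma daggerSymm_homEquiv_apply (adj : F ⊣ G)
    (hF : ∀ {A B : C} (f : A ⟶ B), F.map (dag f) = dag (F.map f))
    (hG : ∀ {A B : D} (f : A ⟶ B), G.map (dag f) = dag (G.map f))
    (A : D) (B : C) (f : G.obj A ⟶ B) :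
    (adj.daggerSymm hF hG).homEquiv A B f = dag ((adj.homEquiv B A).symm (dag f)) := by
  simp [daggerSymm]

end CategoryTheory.Adjunction

/-- A dagger adjunction goes both ways: if `F ⊣ G` with both functors dagger functors,
then `G ⊣ F` via the bijection `f ↦ θ(f†)†`. -/
theorem dagger_adjunction_symm {C D : Type*} [Category C] [Category D]
    [DaggerCategory C] [DaggerCategory D] (F : C ⥤ D) (G : D ⥤ C)
    (hF : ∀ {A B : C} (f : A ⟶ B), F.map (dag f) = dag (F.map f))
    (hG : ∀ {A B : D} (f : A ⟶ B), G.map (dag f) = dag (G.map f))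
    (adj : F ⊣ G) :
    ∃ adj' : G ⊣ F, ∀ (A : D) (B : C) (f : G.obj A ⟶ B),
      adj'.homEquiv A B f = dag ((adj.homEquiv B A).symm (dag f)) :=
  ⟨adj.daggerSymm hF hG, adj.daggerSymm_homEquiv_apply hF hG⟩
end

section
/- If a Cartesian closed category C admits a dagger (an involutive identity-on-objects contravariant endofunctor), then every hom-set of C has exactly one element. -/
open CategoryTheory

open DaggerCategory

open Limits MonoidalCategory

def DaggerCategory.isInitialOfIsTerminal {C : Type*} [Category C] [DaggerCategory C] {T : C}
    (hT : IsTerminal T) : IsInitial T :=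
  IsInitial.ofUniqueHom (fun X => dag (hT.from X)) fun X f => by
    rw [← dag_dag f, hT.hom_ext (dag f) (hT.from X)]

/-- `A ⟶ B` is in bijection with `A ⊗ 𝟙 ⟶ B`, hence with the global elements `𝟙 ⟶ Bᴬ`. -/
theorem MonoidalClosed.subsingleton_hom_of_isInitial_unit {C : Type*} [Category C]
    [MonoidalCategory C] [MonoidalClosed C] (hI : IsInitial (𝟙_ C)) (A B : C) :
    Subsingleton (A ⟶ B) :=
  have : ∀ X : C, Subsingleton (𝟙_ C ⟶ X) := fun _ => ⟨hI.hom_ext⟩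
  (((ρ_ A).symm.homCongr (Iso.refl B)).trans ((ihom.adjunction A).homEquiv _ _)).subsingleton

/-- A Cartesian closed category admitting a dagger has only singleton hom-sets. -/
theorem cartesianClosed_dagger_trivial {C : Type*} [Category C]
    [CartesianMonoidalCategory C] [MonoidalClosed C] [DaggerCategory C]
    (A B : C) : Subsingleton (A ⟶ B) :=
  MonoidalClosed.subsingleton_hom_of_isInitial_unit
    (DaggerCategory.isInitialOfIsTerminal CartesianMonoidalCategory.isTerminalTensorUnit) A B
end

section
/- Let A and B be objects of a category C (with no enrichment assumed), and suppose (A⊕B, p_A, p_B, i_A, i_B) is a biproduct in the sense that (A⊕B, p_A, p_B) is a product, (A⊕B, i_A, i_B) is a coproduct, p_A ∘ i_A = id_A, p_B ∘ i_B = id_B, and i_A∘p_A∘i_B∘p_B = i_B∘p_B∘i_A∘p_A. Then p_B ∘ i_A : A ⟶ B is a zero morphism, i.e. both constant and coconstant. -/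
/-!
With `eA = pA ≫ iA` and `eB = pB ≫ iB`, precompose `eA ≫ eB ≫ pB = eB ≫ eA ≫ pB` with the
pairing of `f : X ⟶ A` and an arbitrary `g : X ⟶ B`. As `iB ≫ pB = 𝟙`, this gives
`f ≫ iA ≫ pB = g ≫ iB ≫ pA ≫ iA ≫ pB`, whose right side does not depend on `f`.
Coconstancy is the dual argument, with copairings.
-/

open CategoryTheory CategoryTheory.Limits

/-- `z` is constant. -/
def IsConstantMor {C : Type*} [Category C] {A B : C} (z : A ⟶ B) : Prop :=
  ∀ {X : C} (f g : X ⟶ A), f ≫ z = g ≫ z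

/-- `z` is coconstant. -/
def IsCoconstantMor {C : Type*} [Category C] {A B : C} (z : A ⟶ B) : Prop :=
  ∀ {X : C} (f g : B ⟶ X), z ≫ f = z ≫ g

section

variable {C : Type*} [Category C] {A B P : C} {pA : P ⟶ A} {pB : P ⟶ B} {iA : A ⟶ P}
  {iB : B ⟶ P}

theorem comp_mixed_eq_of_isLimit (hprod : IsLimit (BinaryFan.mk pA pB)) (hB : iB ≫ pB = 𝟙 B)
    (hcomm : (pB ≫ iB) ≫ (pA ≫ iA) = (pA ≫ iA) ≫ (pB ≫ iB)) {X : C} (f : X ⟶ A) (g : X ⟶ B) :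
    f ≫ iA ≫ pB = g ≫ iB ≫ pA ≫ iA ≫ pB := by
  obtain ⟨t, htA, htB⟩ : ∃ t : X ⟶ P, t ≫ pA = f ∧ t ≫ pB = g :=
    ⟨_, (BinaryFan.IsLimit.lift' hprod f g).2⟩
  calc f ≫ iA ≫ pB = t ≫ ((pA ≫ iA) ≫ (pB ≫ iB)) ≫ pB := by
        rw [← htA]; simp only [Category.assoc, hB, Category.comp_id]
    _ = t ≫ ((pB ≫ iB) ≫ (pA ≫ iA)) ≫ pB := by rw [hcomm]
    _ = g ≫ iB ≫ pA ≫ iA ≫ pB := by rw [← htB]; simp only [Category.assoc]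

theorem mixed_comp_eq_of_isColimit (hcoprod : IsColimit (BinaryCofan.mk iA iB))
    (hA : iA ≫ pA = 𝟙 A) (hcomm : (pB ≫ iB) ≫ (pA ≫ iA) = (pA ≫ iA) ≫ (pB ≫ iB)) {Y : C}
    (a : A ⟶ Y) (b : B ⟶ Y) : iA ≫ pB ≫ b = iA ≫ pB ≫ iB ≫ pA ≫ a := by
  obtain ⟨s, hsA, hsB⟩ : ∃ s : P ⟶ Y, iA ≫ s = a ∧ iB ≫ s = b :=
    ⟨_, (BinaryCofan.IsColimit.desc' hcoprod a b).2⟩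
  calc iA ≫ pB ≫ b = iA ≫ ((pA ≫ iA) ≫ (pB ≫ iB)) ≫ s := by
        rw [← hsB]; simp only [Category.assoc, reassoc_of% hA]
    _ = iA ≫ ((pB ≫ iB) ≫ (pA ≫ iA)) ≫ s := by rw [hcomm]
    _ = iA ≫ pB ≫ iB ≫ pA ≫ a := by rw [← hsA]; simp only [Category.assoc]

theorem isConstantMor_mixed_of_isLimit (hprod : IsLimit (BinaryFan.mk pA pB))
    (hB : iB ≫ pB = 𝟙 B) (hcomm : (pB ≫ iB) ≫ (pA ≫ iA) = (pA ≫ iA) ≫ (pB ≫ iB)) :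
    IsConstantMor (iA ≫ pB) := fun f g => by
  rw [comp_mixed_eq_of_isLimit hprod hB hcomm f (f ≫ iA ≫ pB),
    comp_mixed_eq_of_isLimit hprod hB hcomm g (f ≫ iA ≫ pB)]

theorem isCoconstantMor_mixed_of_isColimit (hcoprod : IsColimit (BinaryCofan.mk iA iB))
    (hA : iA ≫ pA = 𝟙 A) (hcomm : (pB ≫ iB) ≫ (pA ≫ iA) = (pA ≫ iA) ≫ (pB ≫ iB)) :
    IsCoconstantMor (iA ≫ pB) := fun u v => by
  simp only [Category.assoc]
  rw [mixed_comp_eq_of_isColimit hcoprod hA hcomm (iA ≫ pB ≫ u) u,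
    mixed_comp_eq_of_isColimit hcoprod hA hcomm (iA ≫ pB ≫ u) v]

end

/-- In a biproduct (defined without any enrichment: a product and a coproduct with
`p_A ∘ i_A = id`, `p_B ∘ i_B = id` and commuting induced idempotents), the
composite `p_B ∘ i_A` is a zero morphism. -/
theorem biproduct_mixed_composite_is_zero {C : Type*} [Category C]
    {A B P : C} (pA : P ⟶ A) (pB : P ⟶ B) (iA : A ⟶ P) (iB : B ⟶ P)
    (hprod : IsLimit (BinaryFan.mk pA pB))
    (hcoprod : IsColimit (BinaryCofan.mk iA iB))
    (h1 : iA ≫ pA = 𝟙 A) (h2 : iB ≫ pB = 𝟙 B)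
    (h3 : (pB ≫ iB) ≫ (pA ≫ iA) = (pA ≫ iA) ≫ (pB ≫ iB)) :
    IsConstantMor (iA ≫ pB) ∧ IsCoconstantMor (iA ≫ pB) :=
  ⟨isConstantMor_mixed_of_isLimit hprod h2 h3, isCoconstantMor_mixed_of_isColimit hcoprod h1 h3⟩
end

section
/- Let (D₁, D₂) be a chain indexed by the natural numbers in a category C, with objects D(n), morphisms q_n : D(n+1) ⟶ D(n) from D₁ and e_n : D(n) ⟶ D(n+1) from D₂, and write e_{n,m} and q_{m,n} for the composites. Let L be an object equipped with morphisms p_n : L ⟶ D(n) forming a cone over D₁ and i_n : D(n) ⟶ L forming a cocone under D₂. If L satisfies normalization (i_n ∘ p_n ∘ i_n = i_n and p_n ∘ i_n ∘ p_n = p_n for all n), then L satisfies independence: i_n ∘ p_n ∘ i_m ∘ p_m = i_m ∘ p_m ∘ i_n ∘ p_n for all n, m; in fact for n < m both sides equal i_n ∘ p_n. -/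
/-!
Normalization says that `p n ≫ i n` is idempotent with `p n` and `i n` as its retraction and
section. For `n ≤ m` the cone condition makes `p n` factor through `p m` and the cocone
condition makes `i n` factor through `i m`, so the idempotent `p m ≫ i m` is absorbed by
`p n ≫ i n` on both sides. Hence the two composites of the idempotents at `n` and `m` both
equal the one at `min n m`.
-/

open CategoryTheory

namespace CategoryTheory

variable {C : Type*} [Category C]

section Idempotent

variable {X Y Z : C} {p : X ⟶ Y} {i : Y ⟶ X}

lemma idem_comp_eq_of_eq_comp (h : p ≫ i ≫ p = p) {f : X ⟶ Z} {g : Y ⟶ Z}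
    (hf : f = p ≫ g) : (p ≫ i) ≫ f = f := by
  rw [hf, Category.assoc, reassoc_of% h]

lemma comp_idem_eq_of_eq_comp (h : i ≫ p ≫ i = i) {f : Z ⟶ X} {g : Z ⟶ Y}
    (hf : f = g ≫ i) : f ≫ p ≫ i = f := by
  rw [hf, Category.assoc, h]

end Idempotent

section Chain

variable {D : ℕ → C} {L : C}

lemma exists_eq_comp_of_le_of_cone {q : ∀ n, D (n + 1) ⟶ D n} {p : ∀ n, L ⟶ D n}
    (hcone : ∀ n, p n = p (n + 1) ≫ q n) {n m : ℕ} (h : n ≤ m) :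
    ∃ Q : D m ⟶ D n, p n = p m ≫ Q := by
  induction h with
  | refl => exact ⟨𝟙 _, (Category.comp_id _).symm⟩
  | step _ ih =>
    obtain ⟨Q, hQ⟩ := ih
    exact ⟨q _ ≫ Q, by rw [hQ, hcone, Category.assoc]⟩

lemma exists_eq_comp_of_le_of_cocone {e : ∀ n, D n ⟶ D (n + 1)} {i : ∀ n, D n ⟶ L}
    (hcocone : ∀ n, i n = e n ≫ i (n + 1)) {n m : ℕ} (h : n ≤ m) :
    ∃ E : D n ⟶ D m, i n = E ≫ i m := by
  induction h with
  | refl => exact ⟨𝟙 _, (Category.id_comp _).symm⟩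
  | step _ ih =>
    obtain ⟨E, hE⟩ := ih
    exact ⟨E ≫ e _, by rw [hE, hcocone, Category.assoc]⟩

end Chain

end CategoryTheory

/-- For a cone/cocone over a chain, normalization implies independence; moreover for
`n < m` both composites `i_n ∘ p_n ∘ i_m ∘ p_m` and `i_m ∘ p_m ∘ i_n ∘ p_n`
equal `i_n ∘ p_n`. -/
theorem normalization_implies_independence {C : Type*} [Category C]
    (D : ℕ → C) (q : ∀ n, D (n + 1) ⟶ D n) (e : ∀ n, D n ⟶ D (n + 1))
    (L : C) (p : ∀ n, L ⟶ D n) (i : ∀ n, D n ⟶ L)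
    (hcone : ∀ n, p n = p (n + 1) ≫ q n)
    (hcocone : ∀ n, i n = e n ≫ i (n + 1))
    (hnorm₁ : ∀ n, i n ≫ p n ≫ i n = i n)
    (hnorm₂ : ∀ n, p n ≫ i n ≫ p n = p n) :
    (∀ n m, (p m ≫ i m) ≫ (p n ≫ i n) = (p n ≫ i n) ≫ (p m ≫ i m)) ∧
    (∀ n m, n < m →
      (p m ≫ i m) ≫ (p n ≫ i n) = p n ≫ i n ∧
      (p n ≫ i n) ≫ (p m ≫ i m) = p n ≫ i n) := by
  have absorb_left {n m : ℕ} (h : n ≤ m) : (p m ≫ i m) ≫ (p n ≫ i n) = p n ≫ i n := by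
    obtain ⟨Q, hQ⟩ := exists_eq_comp_of_le_of_cone hcone h
    exact idem_comp_eq_of_eq_comp (hnorm₂ m) (g := Q ≫ i n) (by rw [hQ, Category.assoc])
  have absorb_right {n m : ℕ} (h : n ≤ m) : (p n ≫ i n) ≫ (p m ≫ i m) = p n ≫ i n := by
    obtain ⟨E, hE⟩ := exists_eq_comp_of_le_of_cocone hcocone h
    exact comp_idem_eq_of_eq_comp (hnorm₁ m) (g := p n ≫ E) (by rw [hE, Category.assoc])
  refine ⟨fun n m => ?_, fun n m h => ⟨absorb_left h.le, absorb_right h.le⟩⟩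
  rcases le_total n m with h | h
  · rw [absorb_left h, absorb_right h]
  · rw [absorb_left h, absorb_right h]
end

section
/- Let (L, (p_n), (i_n)) be an ambilimit of a chain with objects D(n), connecting morphisms q_n : D(n+1) ⟶ D(n), e_n : D(n) ⟶ D(n+1) satisfying q_n ∘ e_n = id. Then for all n, m, the composite p_m ∘ i_n : D(n) ⟶ D(m) equals e_{n,m} (the composite of the e's) if n ≤ m, and equals q_{n,m} (the composite of the q's) otherwise. -/
/-!
Since `q_n ∘ e_n = id`, each `D n` carries a cone over the `q`-chain whose `m`-th leg is
`q_{n+m,m} ∘ e_{n,n+m}` and whose `n`-th leg is the identity; the map it induces into the limit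
is a section of `p_n`. So `p_n` is epi, and normalization `p_n ∘ i_n ∘ p_n = p_n` forces
`p_n ∘ i_n = id`. The theorem follows by writing `i_n = i_m ∘ e_{n,m}` for `n ≤ m` and
`p_m = q_{n,m} ∘ p_n` for `m < n`.
-/

open CategoryTheory

/-- Composite `e_{n,m} = e_{m-1} ∘ ⋯ ∘ e_n : D n ⟶ D m` for `n ≤ m`. -/
def eComp {C : Type*} [Category C] {D : ℕ → C} (e : ∀ n, D n ⟶ D (n + 1))
    {n m : ℕ} (h : n ≤ m) : D n ⟶ D m :=
  Nat.leRecOn h (fun {k} (f : D n ⟶ D k) => f ≫ e k) (𝟙 (D n))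

/-- Composite `q_{m,n} = q_n ∘ ⋯ ∘ q_{m-1} : D m ⟶ D n` for `n ≤ m`. -/
def qComp {C : Type*} [Category C] {D : ℕ → C} (q : ∀ n, D (n + 1) ⟶ D n)
    {n m : ℕ} (h : n ≤ m) : D m ⟶ D n :=
  Nat.leRecOn h (fun {k} (f : D k ⟶ D n) => q k ≫ f) (𝟙 (D n))

section Chain

variable {C : Type*} [Category C] {D : ℕ → C}

lemma eComp_self (e : ∀ n, D n ⟶ D (n + 1)) {n : ℕ} (h : n ≤ n) :
    eComp e h = 𝟙 (D n) := Nat.leRecOn_self _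

lemma eComp_succ (e : ∀ n, D n ⟶ D (n + 1)) {n m : ℕ} (h : n ≤ m) (h' : n ≤ m + 1) :
    eComp e h' = eComp e h ≫ e m := Nat.leRecOn_succ h _

lemma qComp_self (q : ∀ n, D (n + 1) ⟶ D n) {n : ℕ} (h : n ≤ n) :
    qComp q h = 𝟙 (D n) := Nat.leRecOn_self _

lemma qComp_succ (q : ∀ n, D (n + 1) ⟶ D n) {n m : ℕ} (h : n ≤ m) (h' : n ≤ m + 1) :
    qComp q h' = q m ≫ qComp q h := Nat.leRecOn_succ h _

lemma qComp_comp_q (q : ∀ n, D (n + 1) ⟶ D n) {m k : ℕ} (h : m + 1 ≤ k) (h' : m ≤ k) :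
    qComp q h ≫ q m = qComp q h' := by
  induction k, h using Nat.le_induction with
  | base => rw [qComp_succ q le_rfl, qComp_self, qComp_self, Category.comp_id,
      Category.id_comp]
  | succ k hk ih =>
    rw [qComp_succ q hk, qComp_succ q (Nat.le_of_succ_le hk), Category.assoc, ih]

lemma eComp_comp_qComp {e : ∀ n, D n ⟶ D (n + 1)} {q : ∀ n, D (n + 1) ⟶ D n}
    (hsplit : ∀ n, e n ≫ q n = 𝟙 (D n)) {n m : ℕ} (h : n ≤ m) :
    eComp e h ≫ qComp q h = 𝟙 (D n) := by
  induction m, h using Nat.le_induction with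
  | base => rw [eComp_self, qComp_self, Category.comp_id]
  | succ m hm ih =>
    rw [eComp_succ e hm, qComp_succ q hm, Category.assoc, ← Category.assoc (e m), hsplit,
      Category.id_comp, ih]

lemma eComp_comp_of_cocone {X : C} {e : ∀ n, D n ⟶ D (n + 1)} {c : ∀ n, D n ⟶ X}
    (hc : ∀ n, c n = e n ≫ c (n + 1)) {n m : ℕ} (h : n ≤ m) :
    eComp e h ≫ c m = c n := by
  induction m, h using Nat.le_induction with
  | base => rw [eComp_self, Category.id_comp]
  | succ m hm ih => rw [eComp_succ e hm, Category.assoc, ← hc, ih]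

lemma comp_qComp_of_cone {X : C} {q : ∀ n, D (n + 1) ⟶ D n} {c : ∀ n, X ⟶ D n}
    (hc : ∀ n, c n = c (n + 1) ≫ q n) {n m : ℕ} (h : n ≤ m) :
    c m ≫ qComp q h = c n := by
  induction m, h using Nat.le_induction with
  | base => rw [qComp_self, Category.comp_id]
  | succ m hm ih => rw [qComp_succ q hm, ← Category.assoc, ← hc, ih]

def retractionCone (e : ∀ n, D n ⟶ D (n + 1)) (q : ∀ n, D (n + 1) ⟶ D n) (n m : ℕ) :
    D n ⟶ D m :=
  eComp e (Nat.le_add_right n m) ≫ qComp q (Nat.le_add_left m n)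

lemma retractionCone_eq_comp_q {e : ∀ n, D n ⟶ D (n + 1)} {q : ∀ n, D (n + 1) ⟶ D n}
    (hsplit : ∀ n, e n ≫ q n = 𝟙 (D n)) (n m : ℕ) :
    retractionCone e q n m = retractionCone e q n (m + 1) ≫ q m := by
  rw [retractionCone, retractionCone, Category.assoc, qComp_comp_q q _ (by omega),
    eComp_succ e (Nat.le_add_right n m), qComp_succ q (Nat.le_add_left m n), Category.assoc,
    ← Category.assoc (e _), hsplit, Category.id_comp]

lemma retractionCone_self {e : ∀ n, D n ⟶ D (n + 1)} {q : ∀ n, D (n + 1) ⟶ D n}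
    (hsplit : ∀ n, e n ≫ q n = 𝟙 (D n)) (n : ℕ) :
    retractionCone e q n n = 𝟙 (D n) :=
  eComp_comp_qComp hsplit _

lemma isSplitEpi_of_isLimit_of_split {e : ∀ n, D n ⟶ D (n + 1)} {q : ∀ n, D (n + 1) ⟶ D n}
    (hsplit : ∀ n, e n ≫ q n = 𝟙 (D n)) {L : C} {p : ∀ n, L ⟶ D n}
    (hlim : ∀ (M : C) (c : ∀ n, M ⟶ D n), (∀ n, c n = c (n + 1) ≫ q n) →
      ∃! f : M ⟶ L, ∀ n, f ≫ p n = c n) (n : ℕ) :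
    IsSplitEpi (p n) :=
  let ⟨s, hs, _⟩ := hlim (D n) (retractionCone e q n) (retractionCone_eq_comp_q hsplit n)
  IsSplitEpi.mk' ⟨s, (hs n).trans (retractionCone_self hsplit n)⟩

end Chain

theorem ambilimit_connecting_maps_general {C : Type*} [Category C]
    (D : ℕ → C) (q : ∀ n, D (n + 1) ⟶ D n) (e : ∀ n, D n ⟶ D (n + 1))
    (hsplit : ∀ n, e n ≫ q n = 𝟙 (D n))
    (L : C) (p : ∀ n, L ⟶ D n) (i : ∀ n, D n ⟶ L)
    (hcone : ∀ n, p n = p (n + 1) ≫ q n)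
    (hcocone : ∀ n, i n = e n ≫ i (n + 1))
    (hlim : ∀ (M : C) (c : ∀ n, M ⟶ D n), (∀ n, c n = c (n + 1) ≫ q n) →
      ∃! f : M ⟶ L, ∀ n, f ≫ p n = c n)
    (hnorm₂ : ∀ n, p n ≫ i n ≫ p n = p n) :
    (∀ n m (h : n ≤ m), i n ≫ p m = eComp e h) ∧
    (∀ n m (h : m < n), i n ≫ p m = qComp q (le_of_lt h)) := by
  have hip : ∀ n, i n ≫ p n = 𝟙 (D n) := fun n => by
    have := isSplitEpi_of_isLimit_of_split hsplit hlim n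
    exact (cancel_epi (p n)).1 (by rw [hnorm₂, Category.comp_id])
  refine ⟨fun n m h => ?_, fun n m h => ?_⟩
  · rw [← eComp_comp_of_cocone hcocone h, Category.assoc, hip, Category.comp_id]
  · rw [← comp_qComp_of_cone hcone h.le, ← Category.assoc, hip, Category.id_comp]

/-- For an ambilimit `(L, p, i)` of a chain of split monics (`q_n ∘ e_n = id`),
the composite `p_m ∘ i_n` is `e_{n,m}` if `n ≤ m` and `q_{n,m}` otherwise. -/
theorem ambilimit_connecting_maps {C : Type*} [Category C]
    (D : ℕ → C) (q : ∀ n, D (n + 1) ⟶ D n) (e : ∀ n, D n ⟶ D (n + 1))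
    (hsplit : ∀ n, e n ≫ q n = 𝟙 (D n))
    (L : C) (p : ∀ n, L ⟶ D n) (i : ∀ n, D n ⟶ L)
    (hcone : ∀ n, p n = p (n + 1) ≫ q n)
    (hcocone : ∀ n, i n = e n ≫ i (n + 1))
    (hlim : ∀ (M : C) (c : ∀ n, M ⟶ D n), (∀ n, c n = c (n + 1) ≫ q n) →
      ∃! f : M ⟶ L, ∀ n, f ≫ p n = c n)
    (hcolim : ∀ (M : C) (c : ∀ n, D n ⟶ M), (∀ n, c n = e n ≫ c (n + 1)) →
      ∃! f : L ⟶ M, ∀ n, i n ≫ f = c n)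
    (hnorm₁ : ∀ n, i n ≫ p n ≫ i n = i n)
    (hnorm₂ : ∀ n, p n ≫ i n ≫ p n = p n)
    (hindep : ∀ n m, (p m ≫ i m) ≫ (p n ≫ i n) = (p n ≫ i n) ≫ (p m ≫ i m)) :
    (∀ n m (h : n ≤ m), i n ≫ p m = eComp e h) ∧
    (∀ n m (h : m < n), i n ≫ p m = qComp q (le_of_lt h)) :=
  ambilimit_connecting_maps_general D q e hsplit L p i hcone hcocone hlim hnorm₂
end

section
/- Let T be a dagger Frobenius monad on a dagger category C, i.e. a monad (T, μ, η) where T is a dagger functor and T(μ_A) ∘ μ†_{T A} = μ_{T A} ∘ T(μ_A†) for all A. Then the assignment sending a Kleisli morphism f : A ⟶ T B to T(f†) ∘ μ_B† ∘ η_B : B ⟶ T A defines a dagger on the Kleisli category Kl(T), and the canonical functors C ⟶ Kl(T) and Kl(T) ⟶ C are dagger functors. -/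
open CategoryTheory

open DaggerCategory

/-!
Write `L f := T f ≫ μ` for the action on morphisms of the functor `Kl(T) ⥤ C`; it is faithful,
since `f = η ≫ L f`, and the candidate dagger is `D f = η ≫ (L f)†`. The Frobenius law together
with the dagger-naturality of `μ†` gives `T η ≫ T μ† ≫ μ = μ†`, which yields `(L f)† = L (D f)`.
Every remaining property of `D` then follows from the functoriality of `L` and the dagger axioms
of `C`.
-/

namespace CategoryTheory.Monad

section

variable {C : Type*} [Category C] (T : Monad C)

lemma η_comp_map_comp_μ {A B : C} (f : A ⟶ T.obj B) :
    T.η.app A ≫ T.map f ≫ T.μ.app B = f := by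
  rw [← Category.assoc, ← T.unit_naturality, Category.assoc, T.left_unit]
  exact Category.comp_id f

lemma map_kleisliComp_comp_μ {A B E : C} (f : A ⟶ T.obj B) (g : B ⟶ T.obj E) :
    T.map (f ≫ T.map g ≫ T.μ.app E) ≫ T.μ.app E
      = (T.map f ≫ T.μ.app B) ≫ T.map g ≫ T.μ.app E := by
  simp only [Functor.map_comp, Category.assoc, T.assoc, T.mu_naturality_assoc]

end

variable {C : Type*} [Category C] [DaggerCategory C] (T : Monad C)

def IsDagger : Prop :=
  ∀ {A B : C} (f : A ⟶ B), T.map (dag f) = dag (T.map f)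

def IsFrobenius : Prop :=
  ∀ A : C, dag (T.μ.app (T.obj A)) ≫ T.map (T.μ.app A)
    = T.map (dag (T.μ.app A)) ≫ T.μ.app (T.obj A)

def kleisliDag {A B : C} (f : A ⟶ T.obj B) : B ⟶ T.obj A :=
  T.η.app B ≫ dag (T.μ.app B) ≫ T.map (dag f)

variable {T}

lemma map_comp_dag_μ (hT : T.IsDagger) {A B : C} (g : B ⟶ A) :
    T.map g ≫ dag (T.μ.app A) = dag (T.μ.app B) ≫ T.map (T.map g) := by
  have h := congrArg dag (T.μ.naturality (dag g))
  rw [Functor.comp_map, dag_comp, dag_comp, ← hT, ← hT, dag_dag] at h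
  exact h.symm

lemma map_η_comp_map_dag_μ_comp_μ (hT : T.IsDagger) (hfrob : T.IsFrobenius) (A : C) :
    T.map (T.η.app A) ≫ T.map (dag (T.μ.app A)) ≫ T.μ.app (T.obj A) = dag (T.μ.app A) := by
  rw [← hfrob, reassoc_of% map_comp_dag_μ hT (T.η.app A), ← T.map_comp, T.right_unit]
  simp

lemma kleisliDag_eq (hT : T.IsDagger) {A B : C} (f : A ⟶ T.obj B) :
    T.kleisliDag f = T.η.app B ≫ dag (T.map f ≫ T.μ.app B) := by
  rw [kleisliDag, dag_comp, hT]

lemma dag_map_comp_μ (hT : T.IsDagger) (hfrob : T.IsFrobenius) {A B : C} (f : A ⟶ T.obj B) :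
    dag (T.map f ≫ T.μ.app B) = T.map (T.kleisliDag f) ≫ T.μ.app A := by
  simp only [kleisliDag, Functor.map_comp, Category.assoc, T.mu_naturality]
  rw [reassoc_of% map_η_comp_map_dag_μ_comp_μ hT hfrob B, dag_comp, hT]

lemma kleisliDag_η (hT : T.IsDagger) (A : C) : T.kleisliDag (T.η.app A) = T.η.app A := by
  rw [kleisliDag_eq hT, T.right_unit]
  simp [dag_id]

lemma kleisliDag_kleisliComp (hT : T.IsDagger) (hfrob : T.IsFrobenius) {A B E : C}
    (f : A ⟶ T.obj B) (g : B ⟶ T.obj E) :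
    T.kleisliDag (f ≫ T.map g ≫ T.μ.app E)
      = T.kleisliDag g ≫ T.map (T.kleisliDag f) ≫ T.μ.app A := by
  rw [kleisliDag_eq hT, map_kleisliComp_comp_μ, dag_comp, dag_map_comp_μ hT hfrob f,
    ← Category.assoc, ← kleisliDag_eq hT]

lemma kleisliDag_kleisliDag (hT : T.IsDagger) (hfrob : T.IsFrobenius) {A B : C}
    (f : A ⟶ T.obj B) : T.kleisliDag (T.kleisliDag f) = f := by
  rw [kleisliDag_eq hT, ← dag_map_comp_μ hT hfrob, dag_dag, η_comp_map_comp_μ]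

lemma kleisliDag_comp_η (hT : T.IsDagger) {A B : C} (f : A ⟶ B) :
    T.kleisliDag (f ≫ T.η.app B) = dag f ≫ T.η.app A := by
  rw [kleisliDag_eq hT, T.map_comp, Category.assoc, T.right_unit]
  simp only [Functor.id_obj, Category.comp_id]
  rw [← hT, T.unit_naturality]

end CategoryTheory.Monad

/-- For a dagger Frobenius monad `T`, the assignment
`f ↦ T(f†) ∘ μ† ∘ η` is a dagger on the Kleisli category `Kl(T)`
(it fixes Kleisli identities, reverses Kleisli composition, and is involutive),
and the canonical functors `C ⟶ Kl(T)` and `Kl(T) ⟶ C` are dagger functors. -/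
theorem kleisli_dagger {C : Type*} [Category C] [DaggerCategory C] (T : Monad C)
    (hT : ∀ {A B : C} (f : A ⟶ B), T.map (dag f) = dag (T.map f))
    (hfrob : ∀ A : C,
      dag (T.μ.app (T.obj A)) ≫ T.map (T.μ.app A)
        = T.map (dag (T.μ.app A)) ≫ T.μ.app (T.obj A)) :
    -- the candidate dagger on Kleisli morphisms
    let D : ∀ {A B : C}, (A ⟶ T.obj B) → (B ⟶ T.obj A) :=
      fun {A B} f => T.η.app B ≫ dag (T.μ.app B) ≫ T.map (dag f)
    -- Kleisli identities are fixed
    (∀ A : C, D (T.η.app A) = T.η.app A) ∧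
    -- contravariance for Kleisli composition
    (∀ {A B E : C} (f : A ⟶ T.obj B) (g : B ⟶ T.obj E),
      D (f ≫ T.map g ≫ T.μ.app E) = D g ≫ T.map (D f) ≫ T.μ.app A) ∧
    -- involutivity
    (∀ {A B : C} (f : A ⟶ T.obj B), D (D f) = f) ∧
    -- the canonical functor C ⟶ Kl(T), f ↦ η ∘ f, preserves daggers
    (∀ {A B : C} (f : A ⟶ B), D (f ≫ T.η.app B) = dag f ≫ T.η.app A) ∧
    -- the canonical functor Kl(T) ⟶ C, f ↦ μ ∘ T f, preserves daggers
    (∀ {A B : C} (f : A ⟶ T.obj B),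
      dag (T.map f ≫ T.μ.app B) = T.map (D f) ≫ T.μ.app A) :=
  ⟨T.kleisliDag_η hT, T.kleisliDag_kleisliComp hT hfrob, T.kleisliDag_kleisliDag hT hfrob,
    T.kleisliDag_comp_η hT, T.dag_map_comp_μ hT hfrob⟩
end

section
/- Let T be a dagger Frobenius monad on a dagger category C, and let (A, a) and (B, b) be Frobenius–Eilenberg–Moore algebras for T, i.e. Eilenberg–Moore algebras additionally satisfying T(a) ∘ μ_A† = μ_A ∘ T(a)† (equivalently T(a) ∘ μ†_{A} is self-adjoint). If f : A ⟶ B satisfies b ∘ T(f) = f ∘ a (an algebra homomorphism), then f† : B ⟶ A satisfies a ∘ T(f†) = f† ∘ b, i.e. f† is an algebra homomorphism (B,b) ⟶ (A,a). -/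
/-!
Daggering the naturality squares of `η` and `μ` (legitimate because `T` is a dagger functor)
shows that every `x : T X ⟶ X` factors as `μ† ≫ T x ≫ η†`. Taking daggers and using the
Frobenius condition on `x` gives `x† = η ≫ μ† ≫ T x`. Hence `a† ≫ T f = f ≫ b†`
follows from `T f ≫ b = a ≫ f` by naturality of `η` and `μ†`, and daggering once more gives
the claim.
-/

open CategoryTheory

open DaggerCategory

section

variable {C D : Type*} [Category C] [Category D] [DaggerCategory C] [DaggerCategory D]

theorem dag_app_comp_map {F G : C ⥤ D}
    (hF : ∀ {X Y : C} (g : X ⟶ Y), F.map (dag g) = dag (F.map g))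
    (hG : ∀ {X Y : C} (g : X ⟶ Y), G.map (dag g) = dag (G.map g)) (α : F ⟶ G)
    {X Y : C} (g : X ⟶ Y) : dag (α.app X) ≫ F.map g = G.map g ≫ dag (α.app Y) := by
  simpa only [dag_comp, hF, hG, dag_dag] using congrArg dag (α.naturality (dag g))

end

namespace CategoryTheory.Monad

variable {C : Type*} [Category C] [DaggerCategory C] (T : Monad C)

theorem dag_η_app_comp (hT : ∀ {X Y : C} (g : X ⟶ Y), T.map (dag g) = dag (T.map g))
    {X Y : C} (g : X ⟶ Y) : dag (T.η.app X) ≫ g = T.map g ≫ dag (T.η.app Y) :=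
  dag_app_comp_map (F := 𝟭 C) (fun _ => rfl) hT T.η g

theorem dag_μ_app_comp_map_map (hT : ∀ {X Y : C} (g : X ⟶ Y), T.map (dag g) = dag (T.map g))
    {X Y : C} (g : X ⟶ Y) :
    dag (T.μ.app X) ≫ T.map (T.map g) = T.map g ≫ dag (T.μ.app Y) :=
  dag_app_comp_map (F := (T : C ⥤ C) ⋙ T) (fun g => by simp only [Functor.comp_map, hT]) hT
    T.μ g

theorem dag_μ_app_comp_map_comp_dag_η_app
    (hT : ∀ {X Y : C} (g : X ⟶ Y), T.map (dag g) = dag (T.map g)) {X : C} (x : T.obj X ⟶ X) :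
    dag (T.μ.app X) ≫ T.map x ≫ dag (T.η.app X) = x := by
  rw [← dag_η_app_comp T hT, ← Category.assoc, ← dag_comp, T.left_unit, dag_id]
  exact Category.id_comp x

theorem dag_eq_η_app_comp_dag_μ_app_comp_map
    (hT : ∀ {X Y : C} (g : X ⟶ Y), T.map (dag g) = dag (T.map g)) {X : C} (x : T.obj X ⟶ X)
    (hx : dag (T.map x) ≫ T.μ.app X = dag (T.μ.app X) ≫ T.map x) :
    dag x = T.η.app X ≫ dag (T.μ.app X) ≫ T.map x := by
  conv_lhs => rw [← dag_μ_app_comp_map_comp_dag_η_app T hT x]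
  rw [dag_comp, dag_comp, dag_dag, dag_dag, Category.assoc, hx]

theorem dag_comp_map_eq_comp_dag
    (hT : ∀ {X Y : C} (g : X ⟶ Y), T.map (dag g) = dag (T.map g))
    {A B : C} {a : T.obj A ⟶ A} {b : T.obj B ⟶ B}
    (ha : dag (T.map a) ≫ T.μ.app A = dag (T.μ.app A) ≫ T.map a)
    (hb : dag (T.map b) ≫ T.μ.app B = dag (T.μ.app B) ≫ T.map b)
    {f : A ⟶ B} (hf : T.map f ≫ b = a ≫ f) : dag a ≫ T.map f = f ≫ dag b :=
  calc dag a ≫ T.map f = T.η.app A ≫ (dag (T.μ.app A) ≫ T.map (T.map f)) ≫ T.map b := by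
        simp only [dag_eq_η_app_comp_dag_μ_app_comp_map T hT a ha, Category.assoc,
          ← Functor.map_comp, hf]
    _ = (T.η.app A ≫ T.map f) ≫ dag (T.μ.app B) ≫ T.map b := by
        rw [dag_μ_app_comp_map_map T hT, Category.assoc, Category.assoc]
    _ = f ≫ dag b := by
        rw [← T.η.naturality f, dag_eq_η_app_comp_dag_μ_app_comp_map T hT b hb, Functor.id_map,
          Category.assoc]

end CategoryTheory.Monad

theorem fem_hom_dagger_general {C : Type*} [Category C] [DaggerCategory C] (T : Monad C)
    (hT : ∀ {A B : C} (f : A ⟶ B), T.map (dag f) = dag (T.map f))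
    {A B : C} (a : T.obj A ⟶ A) (b : T.obj B ⟶ B)
    (haF : dag (T.map a) ≫ T.μ.app A = dag (T.μ.app A) ≫ T.map a)
    (hbF : dag (T.map b) ≫ T.μ.app B = dag (T.μ.app B) ≫ T.map b)
    (f : A ⟶ B) (hf : T.map f ≫ b = a ≫ f) :
    T.map (dag f) ≫ a = b ≫ dag f := by
  simpa only [dag_comp, dag_dag, hT] using
    congrArg dag (T.dag_comp_map_eq_comp_dag hT haF hbF hf)

/-- The dagger of a homomorphism of Frobenius–Eilenberg–Moore algebras is again a
homomorphism, in the opposite direction. -/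
theorem fem_hom_dagger {C : Type*} [Category C] [DaggerCategory C] (T : Monad C)
    (hT : ∀ {A B : C} (f : A ⟶ B), T.map (dag f) = dag (T.map f))
    (hfrob : ∀ A : C,
      dag (T.μ.app (T.obj A)) ≫ T.map (T.μ.app A)
        = T.map (dag (T.μ.app A)) ≫ T.μ.app (T.obj A))
    {A B : C} (a : T.obj A ⟶ A) (b : T.obj B ⟶ B)
    (ha₁ : T.η.app A ≫ a = 𝟙 A) (ha₂ : T.map a ≫ a = T.μ.app A ≫ a)
    (hb₁ : T.η.app B ≫ b = 𝟙 B) (hb₂ : T.map b ≫ b = T.μ.app B ≫ b)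
    (haF : dag (T.map a) ≫ T.μ.app A = dag (T.μ.app A) ≫ T.map a)
    (hbF : dag (T.map b) ≫ T.μ.app B = dag (T.μ.app B) ≫ T.map b)
    (f : A ⟶ B) (hf : T.map f ≫ b = a ≫ f) :
    T.map (dag f) ≫ a = b ≫ dag f :=
  fem_hom_dagger_general T hT a b haF hbF f hf
end
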